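/- arXiv:1104.4684 — 6 statements merged into one kernel-verified Lean document; each statement's English description precedes it below -/
import Mathlib

section
/- For each integer k ≥ 1 there is a constant A_k depending only on k with the following property: if I ⊂ ℝ is an interval, η > 0, and g : I → ℝ is k times differentiable with |g^{(k)}(t)| > η for all t ∈ I, then for every ε > 0 the Lebesgue measure of {t ∈ I : |g(t)| < ε} is at most A_k ε^{1/k} η^{−1/k}. -/
/-!
Induction on `k`. For `k = 1` the mean value theorem shows that any two points of the sublevel set
are at distance at most `2ε/η`. In the step from `k` to `k + 1`, the function `g^{(k)}` has a
nonvanishing derivative, so it is monotone and `{|g^{(k)}| > δ}` is the union of two intervals;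
on each the induction hypothesis applies with `δ` in place of `η`, while `{|g^{(k)}| ≤ δ}` has
measure at most `2δ/η` by the case `k = 1`. The choice `δ = η (ε/η)^{1/(k+1)}` balances the
three bounds and gives the constant `A_k = 2^{k+1} - 2`.
-/

open MeasureTheory Set

def HasDerivChainOn (f : ℕ → ℝ → ℝ) (k : ℕ) (s : Set ℝ) : Prop :=
  ∀ j < k, ∀ t ∈ s, HasDerivWithinAt (f j) (f (j + 1) t) s t

namespace HasDerivChainOn

variable {f : ℕ → ℝ → ℝ} {k : ℕ} {s t : Set ℝ}

theorem mono_set (h : HasDerivChainOn f k s) (hts : t ⊆ s) : HasDerivChainOn f k t :=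
  fun j hj x hx => (h j hj x (hts hx)).mono hts

theorem of_succ (h : HasDerivChainOn f (k + 1) s) : HasDerivChainOn f k s :=
  fun j hj => h j (hj.trans k.lt_succ_self)

end HasDerivChainOn

theorem hasDerivChainOn_iteratedDerivWithin {g : ℝ → ℝ} {k : ℕ} {s : Set ℝ}
    (hg : ∀ j < k, DifferentiableOn ℝ (iteratedDerivWithin j g s) s) :
    HasDerivChainOn (fun j => iteratedDerivWithin j g s) k s := fun j hj t ht => by
  simpa only [iteratedDerivWithin_succ] using (hg j hj t ht).hasDerivWithinAt

section SingleDerivative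

variable {I : Set ℝ} {f f' : ℝ → ℝ}

theorem Set.OrdConnected.mul_abs_sub_le_abs_sub_of_lt_abs_deriv (hI : I.OrdConnected)
    (hf : ∀ t ∈ I, HasDerivWithinAt f (f' t) I t) {η : ℝ} (hf' : ∀ t ∈ I, η < |f' t|)
    {s t : ℝ} (hs : s ∈ I) (ht : t ∈ I) : η * |t - s| ≤ |f t - f s| := by
  wlog hst : s < t generalizing s t
  · rcases (not_lt.1 hst).eq_or_lt with rfl | hts
    · simp
    · simpa only [abs_sub_comm] using this ht hs hts
  have hsub : Icc s t ⊆ I := hI.out hs ht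
  obtain ⟨c, hc, hslope⟩ := exists_hasDerivAt_eq_slope f f' hst
    (fun x hx => (hf x (hsub hx)).continuousWithinAt.mono hsub)
    (fun x hx => (hf x (hsub (Ioo_subset_Icc_self hx))).hasDerivAt
      (Filter.mem_of_superset (Ioo_mem_nhds hx.1 hx.2) (Ioo_subset_Icc_self.trans hsub)))
  have hη := hf' c (hsub (Ioo_subset_Icc_self hc))
  rw [hslope, abs_div, abs_of_pos (sub_pos.2 hst), lt_div_iff₀ (sub_pos.2 hst)] at hη
  rw [abs_of_pos (sub_pos.2 hst)]
  exact hη.le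

theorem Set.OrdConnected.volume_setOf_abs_le_le_of_lt_abs_deriv (hI : I.OrdConnected)
    (hf : ∀ t ∈ I, HasDerivWithinAt f (f' t) I t) {η : ℝ} (hη : 0 < η)
    (hf' : ∀ t ∈ I, η < |f' t|) (ε : ℝ) :
    volume {t ∈ I | |f t| ≤ ε} ≤ ENNReal.ofReal (2 * ε / η) := by
  refine (Real.volume_le_diam _).trans (Metric.ediam_le_of_forall_dist_le ?_)
  rintro s ⟨hs, hfs⟩ t ⟨ht, hft⟩
  rw [Real.dist_eq, le_div_iff₀ hη, mul_comm, abs_sub_comm]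
  calc η * |t - s| ≤ |f t - f s| := hI.mul_abs_sub_le_abs_sub_of_lt_abs_deriv hf hf' hs ht
    _ ≤ |f t| + |f s| := abs_sub _ _
    _ ≤ 2 * ε := by linarith

theorem Set.OrdConnected.monotoneOn_or_antitoneOn_of_deriv_ne_zero (hI : I.OrdConnected)
    (hf : ∀ t ∈ I, HasDerivWithinAt f (f' t) I t) (hf' : ∀ t ∈ I, f' t ≠ 0) :
    MonotoneOn f I ∨ AntitoneOn f I := by
  have hconv : Convex ℝ I := hI.convex
  have hcont : ContinuousOn f I := fun t ht => (hf t ht).continuousWithinAt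
  have hint : ∀ t ∈ interior I, HasDerivWithinAt f (f' t) (interior I) t :=
    fun t ht => (hf t (interior_subset ht)).mono interior_subset
  rcases hasDerivWithinAt_forall_lt_or_forall_gt_of_forall_ne hconv hf hf' with hneg | hpos
  · exact .inr (strictAntiOn_of_hasDerivWithinAt_neg hconv hcont hint
      fun t ht => hneg t (interior_subset ht)).antitoneOn
  · exact .inl (strictMonoOn_of_hasDerivWithinAt_pos hconv hcont hint
      fun t ht => hpos t (interior_subset ht)).monotoneOn

theorem Set.OrdConnected.setOf_lt_of_deriv_ne_zero (hI : I.OrdConnected)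
    (hf : ∀ t ∈ I, HasDerivWithinAt f (f' t) I t) (hf' : ∀ t ∈ I, f' t ≠ 0) (c : ℝ) :
    {t ∈ I | c < f t}.OrdConnected := by
  refine ⟨fun a ⟨ha, hca⟩ b ⟨hb, hcb⟩ z hz => ⟨hI.out ha hb hz, ?_⟩⟩
  rcases hI.monotoneOn_or_antitoneOn_of_deriv_ne_zero hf hf' with hmono | hanti
  · exact hca.trans_le (hmono ha (hI.out ha hb hz) hz.1)
  · exact hcb.trans_le (hanti (hI.out ha hb hz) hb hz.2)

end SingleDerivative

theorem Real.div_rpow_inv_natCast_succ_rpow_inv_natCast {r : ℝ} (hr : 0 < r) {n : ℕ}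
    (hn : n ≠ 0) :
    (r / r ^ ((n + 1 : ℕ)⁻¹ : ℝ)) ^ (n⁻¹ : ℝ) = r ^ ((n + 1 : ℕ)⁻¹ : ℝ) := by
  set x := r ^ ((n + 1 : ℕ)⁻¹ : ℝ)
  have hx : 0 < x := by positivity
  have hr : r = x ^ (n + 1) := (Real.rpow_inv_natCast_pow hr.le n.succ_ne_zero).symm
  rw [hr, pow_succ, mul_div_cancel_right₀ _ hx.ne', Real.pow_rpow_inv_natCast hx.le hn]

theorem MeasureTheory.measure_sep_le_of_abs_le_or_lt_or_neg_lt {μ : Measure ℝ} (I : Set ℝ)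
    (p : ℝ → Prop) (a : ℝ → ℝ) (δ : ℝ) :
    μ {t ∈ I | p t} ≤ μ {t ∈ I | |a t| ≤ δ} + μ {t ∈ {t ∈ I | δ < a t} | p t}
      + μ {t ∈ {t ∈ I | δ < -a t} | p t} := by
  refine (measure_mono ?_).trans ((measure_union_le _ _).trans
    (add_le_add (measure_union_le _ _) le_rfl))
  rintro t ⟨ht, hpt⟩
  rcases le_or_gt |a t| δ with hle | hlt
  · exact .inl (.inl ⟨ht, hle⟩)
  · rcases lt_abs.1 hlt with h | h
    · exact .inl (.inr ⟨⟨ht, h⟩, hpt⟩)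
    · exact .inr ⟨⟨ht, h⟩, hpt⟩

theorem Set.OrdConnected.volume_setOf_abs_le_le_of_hasDerivChainOn
    {f : ℕ → ℝ → ℝ} {k : ℕ} (hk : 1 ≤ k) {I : Set ℝ} (hI : I.OrdConnected)
    (hf : HasDerivChainOn f k I) {η : ℝ} (hη : 0 < η) (hfk : ∀ t ∈ I, η < |f k t|)
    {ε : ℝ} (hε : 0 < ε) :
    volume {t ∈ I | |f 0 t| ≤ ε} ≤
      ENNReal.ofReal ((2 ^ (k + 1) - 2) * (ε / η) ^ (k⁻¹ : ℝ)) := by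
  induction k, hk using Nat.le_induction generalizing I η with
  | base =>
    convert hI.volume_setOf_abs_le_le_of_lt_abs_deriv (hf 0 one_pos) hη hfk ε using 2
    norm_num
    ring
  | succ k hk ih =>
    have hfk' : ∀ t ∈ I, HasDerivWithinAt (f k) (f (k + 1) t) I t := hf k k.lt_succ_self
    have hne : ∀ t ∈ I, f (k + 1) t ≠ 0 := fun t ht h0 => by
      simpa [h0] using hη.trans (hfk t ht)
    set x := (ε / η) ^ ((k + 1 : ℕ)⁻¹ : ℝ)
    have hx : 0 < x := by positivity
    set δ := η * x
    have hδ : 0 < δ := by positivity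
    set R := {t ∈ I | δ < f k t}
    set L := {t ∈ I | δ < -f k t}
    have hR : R.OrdConnected := hI.setOf_lt_of_deriv_ne_zero hfk' hne δ
    have hL : L.OrdConnected := hI.setOf_lt_of_deriv_ne_zero (fun t ht => (hfk' t ht).neg)
      (fun t ht => neg_ne_zero.2 (hne t ht)) δ
    have volM := hI.volume_setOf_abs_le_le_of_lt_abs_deriv hfk' hη hfk δ
    have volR := ih hR (hf.of_succ.mono_set (sep_subset _ _)) hδ
      fun t ht => ht.2.trans_le (le_abs_self _)
    have volL := ih hL (hf.of_succ.mono_set (sep_subset _ _)) hδ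
      fun t ht => ht.2.trans_le (neg_le_abs _)
    have hεδ : (ε / δ) ^ (k⁻¹ : ℝ) = x := by
      rw [div_mul_eq_div_div]
      exact Real.div_rpow_inv_natCast_succ_rpow_inv_natCast (div_pos hε hη) (by omega)
    have hδη : 2 * δ / η = 2 * x := by rw [mul_div_assoc, mul_div_cancel_left₀ x hη.ne']
    rw [hεδ] at volR volL
    rw [hδη] at volM
    have hCx : 0 ≤ (2 ^ (k + 1) - 2 : ℝ) * x := by
      have : (2 : ℝ) ^ 1 ≤ 2 ^ (k + 1) := pow_le_pow_right₀ one_le_two (by omega)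
      exact mul_nonneg (by linarith) hx.le
    calc volume {t ∈ I | |f 0 t| ≤ ε}
        ≤ volume {t ∈ I | |f k t| ≤ δ} + volume {t ∈ R | |f 0 t| ≤ ε}
          + volume {t ∈ L | |f 0 t| ≤ ε} :=
          measure_sep_le_of_abs_le_or_lt_or_neg_lt I _ (f k) δ
      _ ≤ ENNReal.ofReal (2 * x) + ENNReal.ofReal ((2 ^ (k + 1) - 2) * x)
          + ENNReal.ofReal ((2 ^ (k + 1) - 2) * x) := by gcongr
      _ = ENNReal.ofReal ((2 ^ (k + 1 + 1) - 2) * x) := by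
          rw [← ENNReal.ofReal_add (by positivity) hCx,
            ← ENNReal.ofReal_add (by positivity) hCx]
          ring_nf

/-- **Classical Van der Corput Lemma (sublevel set form).**
For each integer `k ≥ 1` there is a constant `A_k` depending only on `k` such that:
if `I ⊂ ℝ` is an interval, `η > 0`, and `g : I → ℝ` is `k` times differentiable with
`|g^{(k)}(t)| > η` for all `t ∈ I`, then for every `ε > 0` the Lebesgue measure of
`{t ∈ I : |g(t)| < ε}` is at most `A_k ε^{1/k} η^{-1/k}`. -/
theorem vanDerCorput_sublevel (k : ℕ) (hk : 1 ≤ k) :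
    ∃ A : ℝ, ∀ (I : Set ℝ), I.OrdConnected →
      ∀ (g : ℝ → ℝ) (η : ℝ), 0 < η →
      (∀ j, j < k → DifferentiableOn ℝ (iteratedDerivWithin j g I) I) →
      (∀ t ∈ I, η < |iteratedDerivWithin k g I t|) →
      ∀ ε : ℝ, 0 < ε →
        volume {t ∈ I | |g t| < ε} ≤
          ENNReal.ofReal (A * ε ^ (1 / (k : ℝ)) * η ^ (-(1 / (k : ℝ)))) := by
  refine ⟨2 ^ (k + 1) - 2, fun I hI g η hη hg hgk ε hε => ?_⟩
  have hsub : {t ∈ I | |g t| < ε} ⊆ {t ∈ I | |iteratedDerivWithin 0 g I t| ≤ ε} :=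
    fun t ⟨ht, hgt⟩ => ⟨ht, by simpa using hgt.le⟩
  calc volume {t ∈ I | |g t| < ε}
      ≤ ENNReal.ofReal ((2 ^ (k + 1) - 2) * (ε / η) ^ (k⁻¹ : ℝ)) :=
        (measure_mono hsub).trans <| hI.volume_setOf_abs_le_le_of_hasDerivChainOn hk
          (hasDerivChainOn_iteratedDerivWithin hg) hη hgk hε
    _ = _ := by
      rw [mul_assoc, Real.div_rpow hε.le hη.le, Real.rpow_neg hη.le, one_div, div_eq_mul_inv]
end

section
/- Let U ⊂ ℝ^n be a bounded open set, and let f be a real-analytic function on an open set containing cl(U). Suppose there is an integer k ≥ 1 such that the k-th partial derivative ∂^k f/∂x_n^k is nonvanishing on cl(U). Then there is a constant B, depending on f, U and k but not on ε, such that for all ε > 0 the Lebesgue measure of {x ∈ U : |f(x)| < ε} is at most B ε^{1/k}. -/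
open MeasureTheory Set

/-- The partial derivative of `g` in the `n`-th coordinate direction. -/
noncomputable def partialDerivLast {n : ℕ} (g : (Fin (n + 1) → ℝ) → ℝ) :
    (Fin (n + 1) → ℝ) → ℝ :=
  fun x => fderiv ℝ g x (Pi.single (Fin.last n) 1)

/-!
On a line parallel to the last axis, `f` restricts to a function `g` of one variable with
`|g⁽ᵏ⁾| ≥ c`, and van der Corput's lemma bounds the length of `{|g| < ε}` by `4ᵏ (ε/c)^(1/k)`:
outside an interval of length `4δ` the derivative `g⁽ᵏ⁻¹⁾` has size at least `cδ` by the mean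
value theorem, so induction on `k` applies there, and `δ = (ε/c)^(1/k)` balances the two terms.
Fubini integrates this bound over a small box on which `|∂ᵏf/∂xₙᵏ| ≥ c`, and compactness of
`cl U` covers `U` by finitely many such boxes.
-/

open Filter Topology

lemma mul_abs_sub_le_abs_sub_of_le_abs_deriv {h h' : ℝ → ℝ} {a b c : ℝ}
    (hder : ∀ t ∈ Icc a b, HasDerivAt h (h' t) t) (hlow : ∀ t ∈ Icc a b, c ≤ |h' t|)
    {s t : ℝ} (hs : s ∈ Icc a b) (ht : t ∈ Icc a b) : c * |t - s| ≤ |h t - h s| := by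
  wlog hst : s < t generalizing s t
  · rcases (not_lt.1 hst).eq_or_lt with rfl | hts
    · simp
    · rw [abs_sub_comm, abs_sub_comm (h t)]
      exact this ht hs hts
  have hsub : Icc s t ⊆ Icc a b := Icc_subset_Icc hs.1 ht.2
  obtain ⟨ξ, hξ, hslope⟩ := exists_hasDerivAt_eq_slope h h' hst
    (fun u hu => (hder u (hsub hu)).continuousAt.continuousWithinAt)
    (fun u hu => hder u (hsub (Ioo_subset_Icc_self hu)))
  have hpos : 0 < t - s := sub_pos.2 hst
  calc c * |t - s| ≤ |h' ξ| * |t - s| :=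
        mul_le_mul_of_nonneg_right (hlow ξ (hsub (Ioo_subset_Icc_self hξ))) (abs_nonneg _)
    _ = |h t - h s| := by
        rw [hslope, abs_div, abs_of_pos hpos, div_mul_cancel₀ _ hpos.ne']

lemma exists_forall_le_abs_of_le_abs_deriv {h h' : ℝ → ℝ} {a b c : ℝ} (hc : 0 ≤ c)
    (hder : ∀ t ∈ Icc a b, HasDerivAt h (h' t) t) (hlow : ∀ t ∈ Icc a b, c ≤ |h' t|) (δ : ℝ) :
    ∃ e, ∀ t ∈ Icc a b, 2 * δ ≤ |t - e| → c * δ ≤ |h t| := by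
  by_cases hlarge : ∀ t ∈ Icc a b, c * δ ≤ |h t|
  · exact ⟨a, fun t ht _ => hlarge t ht⟩
  push Not at hlarge
  obtain ⟨e, he, hhe⟩ := hlarge
  refine ⟨e, fun t ht hte => ?_⟩
  have hgap := mul_abs_sub_le_abs_sub_of_le_abs_deriv hder hlow he ht
  have hfar := mul_le_mul_of_nonneg_left hte hc
  linarith [abs_sub (h t) (h e)]

lemma volume_sublevel_Icc_le_of_far (g : ℝ → ℝ) {a b e δ ε : ℝ} {M : ENNReal}
    (hfar : ∀ a' b', Icc a' b' ⊆ Icc a b → (∀ t ∈ Icc a' b', 2 * δ ≤ |t - e|) →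
      volume {t ∈ Icc a' b' | |g t| < ε} ≤ M) :
    volume {t ∈ Icc a b | |g t| < ε} ≤ M + ENNReal.ofReal (4 * δ) + M := by
  have hsplit : {t ∈ Icc a b | |g t| < ε} ⊆
      {t ∈ Icc a (min b (e - 2 * δ)) | |g t| < ε} ∪ Icc (e - 2 * δ) (e + 2 * δ) ∪
        {t ∈ Icc (max a (e + 2 * δ)) b | |g t| < ε} := by
    rintro t ⟨⟨hat, htb⟩, hgt⟩
    rcases le_or_gt t (e - 2 * δ) with hle | hlt
    · exact Or.inl (Or.inl ⟨⟨hat, le_min htb hle⟩, hgt⟩)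
    rcases le_or_gt t (e + 2 * δ) with hle' | hlt'
    · exact Or.inl (Or.inr ⟨hlt.le, hle'⟩)
    · exact Or.inr ⟨⟨max_le hat hlt'.le, htb⟩, hgt⟩
  have hleft := hfar a (min b (e - 2 * δ)) (Icc_subset_Icc_right (min_le_left _ _))
    fun t ht => by
      rw [abs_sub_comm]
      exact le_abs.2 (Or.inl (by linarith [ht.2.trans (min_le_right _ _)]))
  have hright := hfar (max a (e + 2 * δ)) b (Icc_subset_Icc_left (le_max_left _ _))
    fun t ht => le_abs.2 (Or.inl (by linarith [(le_max_right _ _).trans ht.1]))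
  have hmid : volume (Icc (e - 2 * δ) (e + 2 * δ)) = ENNReal.ofReal (4 * δ) := by
    rw [Real.volume_Icc]; ring_nf
  calc _ ≤ _ := measure_mono hsplit
    _ ≤ _ := (measure_union_le _ _).trans (add_le_add_left (measure_union_le _ _) _)
    _ ≤ _ := by rw [hmid]; gcongr

lemma rpow_div_rpow_one_div_add_one {x : ℝ} (hx : 0 < x) {k : ℝ} (hk : k ≠ 0) (hk' : k + 1 ≠ 0) :
    (x / x ^ (1 / (k + 1))) ^ (1 / k) = x ^ (1 / (k + 1)) := by
  nth_rw 1 [← Real.rpow_one x]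
  rw [← Real.rpow_sub hx, ← Real.rpow_mul hx.le]
  congr 1
  field_simp
  ring

theorem volume_sublevel_Icc_le {g : ℕ → ℝ → ℝ} {ε : ℝ} (hε : 0 < ε) {k : ℕ} (hk : 1 ≤ k)
    {a b c : ℝ} (hc : 0 < c) (hg : ∀ j < k, ∀ t ∈ Icc a b, HasDerivAt (g j) (g (j + 1) t) t)
    (hlow : ∀ t ∈ Icc a b, c ≤ |g k t|) :
    volume {t ∈ Icc a b | |g 0 t| < ε} ≤ ENNReal.ofReal (4 ^ k * (ε / c) ^ (1 / (k : ℝ))) := by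
  induction k, hk using Nat.le_induction generalizing a b c with
  | base =>
    obtain ⟨e, he⟩ := exists_forall_le_abs_of_le_abs_deriv hc.le (hg 0 one_pos) hlow (ε / c)
    refine (volume_sublevel_Icc_le_of_far (g 0) (e := e) (δ := ε / c) (M := 0) ?_).trans ?_
    · intro a' b' hsub hfar
      have hempty : {t ∈ Icc a' b' | |g 0 t| < ε} = ∅ := by
        refine eq_empty_of_forall_notMem fun t ⟨ht, hgt⟩ => ?_
        have := he t (hsub ht) (hfar t ht)
        rw [mul_div_cancel₀ _ hc.ne'] at this
        linarith
      rw [hempty, measure_empty]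
    · simp
  | succ k hk ih =>
    have hk0 : (k : ℝ) ≠ 0 := by positivity
    set δ := (ε / c) ^ (1 / ((k : ℝ) + 1))
    have hδ : 0 < δ := by positivity
    obtain ⟨e, he⟩ := exists_forall_le_abs_of_le_abs_deriv hc.le
      (hg k (Nat.lt_succ_self k)) hlow δ
    refine (volume_sublevel_Icc_le_of_far (g 0) (e := e) (δ := δ)
      (M := ENNReal.ofReal (4 ^ k * δ)) ?_).trans ?_
    · intro a' b' hsub hfar
      have := ih (c := c * δ) (mul_pos hc hδ)
        (fun j hj t ht => hg j (hj.trans (Nat.lt_succ_self k)) t (hsub ht))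
        (fun t ht => he t (hsub ht) (hfar t ht))
      rwa [← div_div, rpow_div_rpow_one_div_add_one (div_pos hε hc) hk0 (by positivity)] at this
    · rw [← ENNReal.ofReal_add (by positivity) (by positivity),
        ← ENNReal.ofReal_add (by positivity) (by positivity)]
      refine ENNReal.ofReal_le_ofReal ?_
      push_cast
      rw [show (ε / c) ^ (1 / ((k : ℝ) + 1)) = δ from rfl, pow_succ]
      have : (4 : ℝ) ≤ 4 ^ k := le_self_pow₀ (by norm_num) (by omega)
      nlinarith

lemma hasDerivAt_comp_insertNth_last {n : ℕ} {g : (Fin (n + 1) → ℝ) → ℝ} {y : Fin n → ℝ}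
    {t : ℝ} (hg : DifferentiableAt ℝ g ((Fin.last n).insertNth t y)) :
    HasDerivAt (fun s => g ((Fin.last n).insertNth s y))
      (partialDerivLast g ((Fin.last n).insertNth t y)) t := by
  have hline : (fun s : ℝ => (Fin.last n).insertNth s y) =
      Function.update ((Fin.last n).insertNth (α := fun _ => ℝ) 0 y) (Fin.last n) := by
    funext s; exact (Fin.update_insertNth _ _ _ _).symm
  have := hasDerivAt_update ((Fin.last n).insertNth (α := fun _ => ℝ) 0 y) (Fin.last n) t
  rw [← hline] at this
  exact hg.hasFDerivAt.comp_hasDerivAt t this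

lemma insertNth_mem_closedBall_iff {n : ℕ} (i : Fin (n + 1)) {z : Fin (n + 1) → ℝ} {r : ℝ}
    (hr : 0 ≤ r) {t : ℝ} {y : Fin n → ℝ} :
    i.insertNth t y ∈ Metric.closedBall z r ↔
      t ∈ Icc (z i - r) (z i + r) ∧ y ∈ Metric.closedBall (i.removeNth z) r := by
  simp only [Metric.mem_closedBall, dist_pi_le_iff hr, Fin.forall_iff_succAbove i,
    Fin.insertNth_apply_same, Fin.insertNth_apply_succAbove, Real.dist_eq, Fin.removeNth,
    mem_Icc, abs_sub_le_iff]
  constructor <;> rintro ⟨⟨h₁, h₂⟩, h⟩ <;> exact ⟨⟨by linarith, by linarith⟩, h⟩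

lemma volume_le_mul_of_forall_slice_le {n : ℕ} (i : Fin (n + 1)) {S : Set (Fin (n + 1) → ℝ)}
    (hS : MeasurableSet S) {A : Set (Fin n → ℝ)} (hA : MeasurableSet A)
    (hSA : ∀ t y, i.insertNth t y ∈ S → y ∈ A) {M : ENNReal}
    (hM : ∀ y ∈ A, volume {t : ℝ | i.insertNth t y ∈ S} ≤ M) :
    volume S ≤ M * volume A := by
  set e := MeasurableEquiv.piFinSuccAbove (fun _ => ℝ) i
  have hslice : ∀ y, (fun t => (t, y)) ⁻¹' (e.symm ⁻¹' S) = {t : ℝ | i.insertNth t y ∈ S} := by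
    intro y; ext t
    simp [e, MeasurableEquiv.piFinSuccAbove_symm_apply, Fin.insertNthEquiv]
  calc volume S = volume (e.symm ⁻¹' S) :=
        ((volume_preserving_piFinSuccAbove _ i).symm.measure_preimage_equiv S).symm
    _ = ∫⁻ y, volume {t : ℝ | i.insertNth t y ∈ S} := by
        rw [Measure.volume_eq_prod, Measure.prod_apply_symm (e.symm.measurable hS)]
        simp only [hslice]
    _ ≤ ∫⁻ y, A.indicator (fun _ => M) y := by
        refine lintegral_mono fun y => ?_
        by_cases hy : y ∈ A
        · rw [indicator_of_mem hy]; exact hM y hy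
        · rw [indicator_of_notMem hy, nonpos_iff_eq_zero, measure_eq_zero_iff_ae_notMem]
          exact ae_of_all _ fun t ht => hy (hSA t y ht)
    _ = M * volume A := by rw [lintegral_indicator hA, setLIntegral_const]

lemma ContinuousOn.measurableSet_sublevel {α : Type*} [TopologicalSpace α] [MeasurableSpace α]
    [OpensMeasurableSpace α] {f : α → ℝ} {s : Set α} (hf : ContinuousOn f s)
    (hs : MeasurableSet s) (ε : ℝ) :
    MeasurableSet {x ∈ s | |f x| < ε} := by
  obtain ⟨u, hu, hfu⟩ := continuousOn_iff'.1 hf (Metric.ball 0 ε) Metric.isOpen_ball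
  have : {x ∈ s | |f x| < ε} = u ∩ s := by
    rw [← hfu]; ext x; simp [and_comm]
  rw [this]
  exact hu.measurableSet.inter hs

theorem volume_sublevel_closedBall_le {n k : ℕ} (hk : 1 ≤ k) {f : (Fin (n + 1) → ℝ) → ℝ}
    {z : Fin (n + 1) → ℝ} {r c ε : ℝ} (hr : 0 ≤ r) (hc : 0 < c) (hε : 0 < ε)
    (hdiff : ∀ j < k, ∀ x ∈ Metric.closedBall z r,
      DifferentiableAt ℝ (partialDerivLast^[j] f) x)
    (hlow : ∀ x ∈ Metric.closedBall z r, c ≤ |(partialDerivLast^[k] f) x|) :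
    volume {x ∈ Metric.closedBall z r | |f x| < ε} ≤
      ENNReal.ofReal (4 ^ k * (ε / c) ^ (1 / (k : ℝ))) * ENNReal.ofReal ((2 * r) ^ n) := by
  have hcont : ContinuousOn f (Metric.closedBall z r) := fun x hx =>
    (hdiff 0 hk x hx).continuousAt.continuousWithinAt
  have hvol := Real.volume_pi_closedBall (Fin.removeNth (Fin.last n) z) hr
  rw [Fintype.card_fin] at hvol
  rw [← hvol]
  refine volume_le_mul_of_forall_slice_le (Fin.last n)
    (hcont.measurableSet_sublevel Metric.isClosed_closedBall.measurableSet ε)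
    Metric.isClosed_closedBall.measurableSet
    (fun t y hty => ((insertNth_mem_closedBall_iff _ hr).1 hty.1).2) fun y hy => ?_
  have hline : ∀ t ∈ Icc (z (Fin.last n) - r) (z (Fin.last n) + r),
      (Fin.last n).insertNth t y ∈ Metric.closedBall z r := fun t ht =>
    (insertNth_mem_closedBall_iff _ hr).2 ⟨ht, hy⟩
  set g : ℕ → ℝ → ℝ := fun j t => (partialDerivLast^[j] f) ((Fin.last n).insertNth t y)
  have hg : ∀ j < k, ∀ t ∈ Icc (z (Fin.last n) - r) (z (Fin.last n) + r),
      HasDerivAt (g j) (g (j + 1) t) t := by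
    intro j hj t ht
    simp only [g, Function.iterate_succ_apply']
    exact hasDerivAt_comp_insertNth_last (hdiff j hj _ (hline t ht))
  calc _ ≤ volume {t ∈ Icc (z (Fin.last n) - r) (z (Fin.last n) + r) | |g 0 t| < ε} :=
        measure_mono fun t ht => ⟨((insertNth_mem_closedBall_iff _ hr).1 ht.1).1, ht.2⟩
    _ ≤ _ := volume_sublevel_Icc_le hε hk hc hg fun t ht => hlow _ (hline t ht)

def HasSublevelBound {α : Type*} [MeasureSpace α] (f : α → ℝ) (p : ℝ) (s : Set α) : Prop :=
  ∃ B : ℝ, ∀ ε : ℝ, 0 < ε → volume {x ∈ s | |f x| < ε} ≤ ENNReal.ofReal (B * ε ^ p)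

namespace HasSublevelBound

variable {α : Type*} [MeasureSpace α] {f : α → ℝ} {p : ℝ} {s t : Set α}

lemma empty : HasSublevelBound f p ∅ := by
  use 0
  simp

lemma mono (hst : s ⊆ t) (h : HasSublevelBound f p t) : HasSublevelBound f p s := by
  obtain ⟨B, hB⟩ := h
  refine ⟨B, fun ε hε => (measure_mono ?_).trans (hB ε hε)⟩
  exact fun x hx => ⟨hst hx.1, hx.2⟩

lemma union (hs : HasSublevelBound f p s) (ht : HasSublevelBound f p t) :
    HasSublevelBound f p (s ∪ t) := by
  obtain ⟨B₁, hB₁⟩ := hs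
  obtain ⟨B₂, hB₂⟩ := ht
  refine ⟨|B₁| + |B₂|, fun ε hε => ?_⟩
  have hεp : 0 ≤ ε ^ p := Real.rpow_nonneg hε.le p
  calc volume {x ∈ s ∪ t | |f x| < ε}
      ≤ volume {x ∈ s | |f x| < ε} + volume {x ∈ t | |f x| < ε} :=
        sep_union ▸ measure_union_le _ _
    _ ≤ ENNReal.ofReal (|B₁| * ε ^ p) + ENNReal.ofReal (|B₂| * ε ^ p) := by
        gcongr
        · exact (hB₁ ε hε).trans (ENNReal.ofReal_le_ofReal (by gcongr; exact le_abs_self B₁))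
        · exact (hB₂ ε hε).trans (ENNReal.ofReal_le_ofReal (by gcongr; exact le_abs_self B₂))
    _ = ENNReal.ofReal ((|B₁| + |B₂|) * ε ^ p) := by
        rw [add_mul, ENNReal.ofReal_add (by positivity) (by positivity)]

end HasSublevelBound

lemma IsCompact.hasSublevelBound {α : Type*} [MeasureSpace α] [TopologicalSpace α]
    {f : α → ℝ} {p : ℝ} {K : Set α} (hK : IsCompact K)
    (hloc : ∀ x ∈ K, ∃ t ∈ 𝓝 x, HasSublevelBound f p t) : HasSublevelBound f p K := by
  refine hK.induction_on (p := HasSublevelBound f p) .empty (fun _ _ hst h => h.mono hst)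
    (fun _ _ hs ht => hs.union ht) fun x hx => ?_
  obtain ⟨t, ht, hft⟩ := hloc x hx
  exact ⟨t, mem_nhdsWithin_of_mem_nhds ht, hft⟩

lemma hasSublevelBound_closedBall {n k : ℕ} (hk : 1 ≤ k) {f : (Fin (n + 1) → ℝ) → ℝ}
    {z : Fin (n + 1) → ℝ} {r c : ℝ} (hr : 0 ≤ r) (hc : 0 < c)
    (hdiff : ∀ j < k, ∀ x ∈ Metric.closedBall z r,
      DifferentiableAt ℝ (partialDerivLast^[j] f) x)
    (hlow : ∀ x ∈ Metric.closedBall z r, c ≤ |(partialDerivLast^[k] f) x|) :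
    HasSublevelBound f (1 / k) (Metric.closedBall z r) := by
  refine ⟨4 ^ k / c ^ (1 / (k : ℝ)) * (2 * r) ^ n, fun ε hε => ?_⟩
  refine (volume_sublevel_closedBall_le hk hr hc hε hdiff hlow).trans_eq ?_
  rw [← ENNReal.ofReal_mul (by positivity), Real.div_rpow hε.le hc.le]
  ring_nf

lemma AnalyticAt.iterate_partialDerivLast {n : ℕ} {g : (Fin (n + 1) → ℝ) → ℝ}
    {x : Fin (n + 1) → ℝ} (hg : AnalyticAt ℝ g x) (j : ℕ) :
    AnalyticAt ℝ (partialDerivLast^[j] g) x := by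
  induction j with
  | zero => exact hg
  | succ j ih =>
    rw [Function.iterate_succ_apply']
    exact (ContinuousLinearMap.apply ℝ ℝ (Pi.single (Fin.last n) 1)).analyticAt _
      |>.comp ih.fderiv

lemma exists_mem_nhds_hasSublevelBound {n k : ℕ} (hk : 1 ≤ k) {f : (Fin (n + 1) → ℝ) → ℝ}
    {x : Fin (n + 1) → ℝ} (hf : AnalyticAt ℝ f x) (hx : (partialDerivLast^[k] f) x ≠ 0) :
    ∃ t ∈ 𝓝 x, HasSublevelBound f (1 / k) t := by
  set c := |(partialDerivLast^[k] f) x| / 2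
  have hc : 0 < c := half_pos (abs_pos.2 hx)
  have hnear : ∀ᶠ y in 𝓝 x, AnalyticAt ℝ f y ∧ c < |(partialDerivLast^[k] f) y| :=
    ((isOpen_analyticAt ℝ f).eventually_mem hf).and <| continuousAt_const.eventually_lt
      (hf.iterate_partialDerivLast k).continuousAt.abs (half_lt_self (abs_pos.2 hx))
  obtain ⟨r, hr, hball⟩ := Metric.nhds_basis_closedBall.mem_iff.1 hnear
  exact ⟨_, Metric.closedBall_mem_nhds x hr, hasSublevelBound_closedBall hk hr.le hc
    (fun j _ y hy => ((hball hy).1.iterate_partialDerivLast j).differentiableAt)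
    fun y hy => (hball hy).2.le⟩

theorem sublevel_analytic_real_general (n : ℕ) (U : Set (Fin (n + 1) → ℝ))
    (hUbdd : Bornology.IsBounded U)
    (W : Set (Fin (n + 1) → ℝ)) (hUW : closure U ⊆ W)
    (f : (Fin (n + 1) → ℝ) → ℝ) (hf : AnalyticOnNhd ℝ f W)
    (k : ℕ) (hk : 1 ≤ k)
    (hder : ∀ x ∈ closure U, (partialDerivLast^[k] f) x ≠ 0) :
    ∃ B : ℝ, ∀ ε : ℝ, 0 < ε →
      volume {x ∈ U | |f x| < ε} ≤ ENNReal.ofReal (B * ε ^ (1 / (k : ℝ))) :=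
  (hUbdd.isCompact_closure.hasSublevelBound fun x hx =>
    exists_mem_nhds_hasSublevelBound hk (hf x (hUW hx)) (hder x hx)).mono subset_closure

/-- **Van der Corput-type sublevel set estimate for real-analytic functions (Theorem 2.1, K = ℝ).**
Let `U ⊂ ℝ^n` be a bounded open set and `f` a real-analytic function on an open set containing
`cl(U)`.  If for some `k ≥ 1` the derivative `∂^k f/∂x_n^k` is nonvanishing on `cl(U)`, then there
is a constant `B` (independent of `ε`) such that for all `ε > 0`,
`|{x ∈ U : |f(x)| < ε}| ≤ B ε^{1/k}`. -/
theorem sublevel_analytic_real (n : ℕ) (U : Set (Fin (n + 1) → ℝ))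
    (hUopen : IsOpen U) (hUbdd : Bornology.IsBounded U)
    (W : Set (Fin (n + 1) → ℝ)) (hWopen : IsOpen W) (hUW : closure U ⊆ W)
    (f : (Fin (n + 1) → ℝ) → ℝ) (hf : AnalyticOnNhd ℝ f W)
    (k : ℕ) (hk : 1 ≤ k)
    (hder : ∀ x ∈ closure U, (partialDerivLast^[k] f) x ≠ 0) :
    ∃ B : ℝ, ∀ ε : ℝ, 0 < ε →
      volume {x ∈ U | |f x| < ε} ≤ ENNReal.ofReal (B * ε ^ (1 / (k : ℝ))) :=
  sublevel_analytic_real_general n U hUbdd W hUW f hf k hk hder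
end

section
/- Let l ≥ 1 be an integer and let α_1, …, α_l ∈ ℂ. Then for every ε > 0, the Lebesgue measure (on ℂ ≅ ℝ²) of the set {z ∈ ℂ : ∏_{i=1}^l |z − α_i| < ε} is at most l·π·ε^{2/l}. -/
open MeasureTheory

/-- Let `l ≥ 1` and `α_1, …, α_l ∈ ℂ`.  Then for every `ε > 0` the Lebesgue measure
(on `ℂ ≅ ℝ²`) of the set `{z ∈ ℂ : ∏_{i=1}^l |z − α_i| < ε}` is at most `l·π·ε^{2/l}`. -/
theorem measure_prod_dist_lt (l : ℕ) (hl : 1 ≤ l) (α : Fin l → ℂ) (ε : ℝ) (hε : 0 < ε) :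
    volume {z : ℂ | ∏ i, ‖z - α i‖ < ε} ≤
      ENNReal.ofReal ((l : ℝ) * Real.pi * ε ^ (2 / (l : ℝ))) := by
  have hl0 : (0:ℝ) < l := by exact_mod_cast hl
  set r := ε ^ ((l:ℝ)⁻¹) with hrdef
  have hr0 : 0 < r := Real.rpow_pos_of_pos hε _
  have hrl : r ^ l = ε := by
    rw [hrdef, ← Real.rpow_natCast (ε ^ ((l:ℝ)⁻¹)) l, ← Real.rpow_mul hε.le,
      inv_mul_cancel₀ hl0.ne', Real.rpow_one]
  have hsub : {z : ℂ | ∏ i, ‖z - α i‖ < ε} ⊆ ⋃ i, Metric.ball (α i) r := by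
    intro z hz
    by_contra h
    simp only [Set.mem_iUnion, Metric.mem_ball, not_exists, not_lt] at h
    have : ε ≤ ∏ i, ‖z - α i‖ := by
      calc ε = ∏ _i : Fin l, r := by rw [Finset.prod_const, Finset.card_univ,
              Fintype.card_fin, hrl]
        _ ≤ ∏ i, ‖z - α i‖ := Finset.prod_le_prod (fun _ _ => hr0.le)
              (fun i _ => by simpa [dist_eq_norm] using h i)
    exact absurd hz (not_lt.mpr this)
  calc volume {z : ℂ | ∏ i, ‖z - α i‖ < ε} ≤ volume (⋃ i, Metric.ball (α i) r) :=
        measure_mono hsub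
    _ ≤ ∑ i : Fin l, volume (Metric.ball (α i) r) := measure_iUnion_fintype_le _ _
    _ = l * (ENNReal.ofReal r ^ 2 * NNReal.pi) := by
        simp [Finset.sum_const, Finset.card_univ]
    _ = ENNReal.ofReal ((l : ℝ) * Real.pi * ε ^ (2 / (l : ℝ))) := by
        rw [← ENNReal.ofReal_pow hr0.le, ← Real.rpow_natCast r 2, hrdef,
          ← Real.rpow_mul hε.le]
        rw [show ((l:ℝ)⁻¹ * (2:ℕ)) = 2 / (l:ℝ) by push_cast; ring]
        rw [show (NNReal.pi : ENNReal) = ENNReal.ofReal Real.pi by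
          rw [← NNReal.coe_real_pi, ENNReal.ofReal_coe_nnreal]]
        rw [ENNReal.ofReal_mul (by positivity), ENNReal.ofReal_mul (by positivity),
          ENNReal.ofReal_natCast]
        ring
end

section
/- Let p be a prime and let P ∈ ℚ_p[X] be a monic polynomial of degree l ≥ 1. Then for every ε > 0, the Haar measure of the set {z ∈ ℚ_p : |P(z)|_p < ε} is at most l·ε^{1/l}. -/
open MeasureTheory

variable {q : ℕ} [Fact q.Prime]

noncomputable instance : MeasurableSpace ℚ_[q] := borel _
instance : BorelSpace ℚ_[q] := ⟨rfl⟩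

/-!
Put `δ = ε ^ (1 / l)` and cover the sublevel set by closed `δ`-balls centred at a maximal
`δ`-separated subset of it. Such a subset has at most `l` points: for `l + 1` of them, `x₀, …, x_l`,
the Lagrange formula for the leading coefficient of the monic `P` reads
`1 = ∑ᵢ P(xᵢ) / ∏_{j ≠ i} (xᵢ - xⱼ)`, whereas in the ultrametric norm the right side has norm at
most `maxᵢ ‖P(xᵢ)‖ / δ ^ l < ε / δ ^ l = 1`. Finally a closed `δ`-ball of `ℚ_p` has Haar measure at
most `δ`, because the ball of radius `p ^ (n + 1)` is the disjoint union of `p` translates of the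
ball of radius `p ^ n`.
-/

open Metric Polynomial
open scoped ENNReal NNReal Finset

namespace Polynomial.Monic

variable {K : Type*} [NormedField K] [IsUltrametricDist K] {P : K[X]}

lemma card_le_natDegree_of_isSeparated (hP : P.Monic) {δ : ℝ≥0} {s : Finset K}
    (hsep : IsSeparated δ (s : Set K)) (hsmall : ∀ x ∈ s, ‖P.eval x‖ < (δ : ℝ) ^ P.natDegree) :
    #s ≤ P.natDegree := by
  classical
  by_contra! hcard
  obtain ⟨t, hts, htcard⟩ := Finset.exists_subset_card_eq hcard
  have hsum : ∑ i ∈ t, P.eval i / ∏ j ∈ t.erase i, (i - j) = 1 := by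
    have := Lagrange.leadingCoeff_eq_sum (v := id) (Set.injOn_id _)
      (by rw [htcard, degree_eq_natDegree hP.ne_zero]; push_cast; rfl)
    simpa [hP.leadingCoeff] using this.symm
  obtain ⟨i, hit, hle⟩ := IsUltrametricDist.exists_norm_finsetSum_le_of_nonempty
    (Finset.card_pos.mp (htcard ▸ Nat.succ_pos _)) fun i => P.eval i / ∏ j ∈ t.erase i, (i - j)
  have hprod : (δ : ℝ) ^ P.natDegree ≤ ∏ j ∈ t.erase i, ‖i - j‖ := by
    have := Finset.prod_le_prod (s := t.erase i) (f := fun _ => (δ : ℝ)) (fun _ _ => δ.coe_nonneg)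
      (g := fun j => ‖i - j‖) fun j hj => ?_
    · rwa [Finset.prod_const, Finset.card_erase_of_mem hit, htcard, Nat.succ_sub_one] at this
    have : (δ : ℝ≥0∞) < edist i j :=
      hsep (hts hit) (hts (Finset.mem_erase.1 hj).2) (Finset.mem_erase.1 hj).1.symm
    rw [edist_nndist, ENNReal.coe_lt_coe, ← NNReal.coe_lt_coe, coe_nndist, dist_eq_norm] at this
    exact this.le
  have hδ : (0 : ℝ) < (δ : ℝ) ^ P.natDegree := (norm_nonneg _).trans_lt (hsmall i (hts hit))
  have : ‖(1 : K)‖ < 1 := calc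
    ‖(1 : K)‖ ≤ ‖P.eval i‖ / ∏ j ∈ t.erase i, ‖i - j‖ := by
      rwa [hsum, norm_div, norm_prod] at hle
    _ < 1 := (div_lt_one (hδ.trans_le hprod)).2 ((hsmall i (hts hit)).trans_le hprod)
  exact (norm_one (α := K)).not_lt this

lemma packingNumber_le_natDegree (hP : P.Monic) (δ : ℝ≥0) :
    packingNumber δ {x | ‖P.eval x‖ < (δ : ℝ) ^ P.natDegree} ≤ P.natDegree := by
  refine iSup_le fun C => iSup_le fun hC => iSup_le fun hsep => ?_
  by_contra! hlt
  obtain ⟨t, htC, htcard⟩ := Set.exists_subset_encard_eq (Order.add_one_le_of_lt hlt)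
  have ht : t.Finite := Set.finite_of_encard_eq_coe htcard
  have := hP.card_le_natDegree_of_isSeparated (s := ht.toFinset) (by simpa using hsep.subset htC)
    fun x hx => hC (htC (by simpa using hx))
  rw [ht.encard_eq_coe_toFinset_card] at htcard
  norm_cast at htcard
  omega

end Polynomial.Monic

lemma MeasureTheory.measure_le_packingNumber_mul {X : Type*} [PseudoMetricSpace X]
    [MeasurableSpace X] (μ : Measure X) {r : ℝ≥0} {s : Set X} {b : ℝ≥0∞}
    (hs : packingNumber r s ≠ ⊤) (hb : ∀ x, μ (closedBall x r) ≤ b) :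
    μ s ≤ packingNumber r s * b := by
  have hN : (maximalSeparatedSet r s).Finite :=
    Set.encard_ne_top_iff.1 (by rwa [encard_maximalSeparatedSet hs])
  have hcover := isCover_iff_subset_iUnion_closedBall.1 (isCover_maximalSeparatedSet hs)
  rw [← encard_maximalSeparatedSet hs, hN.encard_eq_coe_toFinset_card]
  calc μ s ≤ μ (⋃ y ∈ hN.toFinset, closedBall y r) := measure_mono (by simpa using hcover)
    _ ≤ ∑ y ∈ hN.toFinset, μ (closedBall y r) := measure_biUnion_finset_le _ _
    _ ≤ ∑ y ∈ hN.toFinset, b := Finset.sum_le_sum fun y _ => hb y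
    _ = _ := by simp

lemma ENNReal.eq_of_apply_add_one_eq_mul {f g : ℤ → ℝ≥0∞} {a : ℝ≥0∞} (ha₀ : a ≠ 0) (ha : a ≠ ⊤)
    (hf : ∀ n, f (n + 1) = a * f n) (hg : ∀ n, g (n + 1) = a * g n) (h₀ : f 0 = g 0) (n : ℤ) :
    f n = g n := by
  induction n using Int.induction_on with
  | zero => exact h₀
  | succ k ih => rw [hf, hg, ih]
  | pred k ih => exact (ENNReal.mul_right_inj ha₀ ha).1 (by rw [← hf, ← hg, sub_add_cancel, ih])

namespace Padic

variable {p : ℕ} [Fact p.Prime]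

lemma exists_norm_sub_natCast_lt_one {x : ℚ_[p]} (hx : ‖x‖ ≤ 1) : ∃ i < p, ‖x - i‖ < 1 := by
  obtain ⟨i, hi, hmem⟩ := PadicInt.exists_mem_range (⟨x, hx⟩ : ℤ_[p])
  exact ⟨i, hi, PadicInt.mem_nonunits.1 hmem⟩

lemma eq_of_norm_natCast_sub_natCast_lt_one {i j : ℕ} (hi : i < p) (hj : j < p)
    (h : ‖(i - j : ℚ_[p])‖ < 1) : i = j := by
  rw [← Int.cast_natCast, ← Int.cast_natCast j, ← Int.cast_sub, norm_intCast_lt_one_iff] at h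
  have := Int.eq_zero_of_abs_lt_dvd h (by rw [abs_lt]; omega)
  omega

lemma norm_mul_p_zpow_neg (y : ℚ_[p]) (m : ℤ) : ‖y * (p : ℚ_[p]) ^ (-m)‖ = ‖y‖ * (p : ℝ) ^ m := by
  rw [norm_mul, norm_p_zpow, neg_neg]

lemma closedBall_zpow_add_one_eq_biUnion (n : ℤ) :
    closedBall (0 : ℚ_[p]) ((p : ℝ) ^ (n + 1)) =
      ⋃ i ∈ Finset.range p, closedBall ((i : ℚ_[p]) * (p : ℚ_[p]) ^ (-(n + 1))) ((p : ℝ) ^ n) := by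
  have hp : (p : ℚ_[p]) ^ (n + 1) ≠ 0 :=
    zpow_ne_zero _ (Nat.cast_ne_zero.2 (Fact.out : p.Prime).ne_zero)
  have hp₁ : (1 : ℝ) ≤ p := Nat.one_le_cast.2 (Fact.out : p.Prime).one_le
  have hpos : (0 : ℝ) < (p : ℝ) ^ (n + 1) := zpow_pos (by linarith) _
  ext x
  simp only [mem_closedBall, Set.mem_iUnion, Finset.mem_range, dist_eq_norm, sub_zero, exists_prop]
  constructor
  · intro hx
    obtain ⟨i, hi, hlt⟩ := exists_norm_sub_natCast_lt_one (x := x * (p : ℚ_[p]) ^ (n + 1)) (by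
      rw [norm_mul, norm_p_zpow, zpow_neg, ← div_eq_mul_inv]
      exact div_le_one_of_le₀ hx (by positivity))
    refine ⟨i, hi, ?_⟩
    rw [norm_le_pow_iff_norm_lt_pow_add_one]
    have : x - i * (p : ℚ_[p]) ^ (-(n + 1)) =
        (x * (p : ℚ_[p]) ^ (n + 1) - i) * (p : ℚ_[p]) ^ (-(n + 1)) := by
      rw [zpow_neg, sub_mul, mul_assoc, mul_inv_cancel₀ hp, mul_one]
    rw [this, norm_mul_p_zpow_neg]
    exact mul_lt_of_lt_one_left hpos hlt
  · rintro ⟨i, hi, hx⟩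
    calc ‖x‖ = ‖(x - i * (p : ℚ_[p]) ^ (-(n + 1))) + i * (p : ℚ_[p]) ^ (-(n + 1))‖ := by
          rw [sub_add_cancel]
      _ ≤ max _ _ := IsUltrametricDist.norm_add_le_max _ _
      _ ≤ (p : ℝ) ^ (n + 1) := by
          refine max_le (hx.trans (zpow_le_zpow_right₀ hp₁ (by omega))) ?_
          rw [norm_mul_p_zpow_neg]
          exact mul_le_of_le_one_left hpos.le (IsUltrametricDist.norm_natCast_le_one _ _)

lemma pairwiseDisjoint_closedBall_zpow (n : ℤ) :
    (Finset.range p : Set ℕ).PairwiseDisjoint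
      fun i => closedBall ((i : ℚ_[p]) * (p : ℚ_[p]) ^ (-(n + 1))) ((p : ℝ) ^ n) := by
  intro i hi j hj hij
  refine Set.disjoint_left.2 fun x hxi hxj => hij ?_
  rw [Finset.coe_range, Set.mem_Iio] at hi hj
  refine eq_of_norm_natCast_sub_natCast_lt_one hi hj ?_
  have hdist : ‖(i - j : ℚ_[p]) * (p : ℚ_[p]) ^ (-(n + 1))‖ ≤ (p : ℝ) ^ n := calc
    _ = ‖(x - j * (p : ℚ_[p]) ^ (-(n + 1))) + -(x - i * (p : ℚ_[p]) ^ (-(n + 1)))‖ := by ring_nf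
    _ ≤ max _ _ := IsUltrametricDist.norm_add_le_max _ _
    _ ≤ (p : ℝ) ^ n := by
      rw [norm_neg]; exact max_le (mem_closedBall_iff_norm.1 hxj) (mem_closedBall_iff_norm.1 hxi)
  have hp : (1 : ℝ) < p := Nat.one_lt_cast.2 (Fact.out : p.Prime).one_lt
  rw [norm_mul_p_zpow_neg] at hdist
  refine lt_of_mul_lt_mul_right (hdist.trans_lt ?_) (zpow_pos (by linarith) (n + 1)).le
  rw [one_mul]
  exact zpow_lt_zpow_right₀ hp (by omega)

variable (μ : Measure ℚ_[p]) [μ.IsAddHaarMeasure]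

lemma addHaar_closedBall_zpow_add_one (n : ℤ) :
    μ (closedBall 0 ((p : ℝ) ^ (n + 1))) = p * μ (closedBall 0 ((p : ℝ) ^ n)) := by
  rw [closedBall_zpow_add_one_eq_biUnion,
    measure_biUnion_finset (pairwiseDisjoint_closedBall_zpow n) fun _ _ => measurableSet_closedBall]
  simp [Measure.addHaar_closedBall_center]

lemma addHaar_closedBall_zpow (hμ : μ (closedBall 0 1) = 1) (c : ℚ_[p]) (n : ℤ) :
    μ (closedBall c ((p : ℝ) ^ n)) = ENNReal.ofReal ((p : ℝ) ^ n) := by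
  have hp : (0 : ℝ) < p := Nat.cast_pos.2 (Fact.out : p.Prime).pos
  rw [Measure.addHaar_closedBall_center]
  refine ENNReal.eq_of_apply_add_one_eq_mul (f := fun n => μ (closedBall 0 ((p : ℝ) ^ n)))
    (g := fun n => ENNReal.ofReal ((p : ℝ) ^ n)) (a := p)
    (by simpa using (Fact.out : p.Prime).ne_zero) (ENNReal.natCast_ne_top p)
    (addHaar_closedBall_zpow_add_one μ) (fun k => ?_) (by simpa using hμ) n
  rw [zpow_add_one₀ hp.ne', mul_comm, ENNReal.ofReal_mul (by positivity), ENNReal.ofReal_natCast]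

lemma addHaar_closedBall_le (hμ : μ (closedBall 0 1) = 1) (c : ℚ_[p]) {r : ℝ} (hr : 0 < r) :
    μ (closedBall c r) ≤ ENNReal.ofReal r := by
  obtain ⟨n, hnr, hrn⟩ := exists_mem_Ico_zpow hr (Nat.one_lt_cast.2 (Fact.out : p.Prime).one_lt)
  have hsub : closedBall c r ⊆ closedBall c ((p : ℝ) ^ n) := fun x hx => by
    rw [mem_closedBall, dist_eq_norm, norm_le_pow_iff_norm_lt_pow_add_one]
    exact (mem_closedBall_iff_norm.1 hx).trans_lt hrn
  calc μ (closedBall c r) ≤ μ (closedBall c ((p : ℝ) ^ n)) := measure_mono hsub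
    _ = ENNReal.ofReal ((p : ℝ) ^ n) := addHaar_closedBall_zpow μ hμ c n
    _ ≤ ENNReal.ofReal r := ENNReal.ofReal_le_ofReal hnr

end Padic

/-- Let `p` be a prime and `P ∈ ℚ_p[X]` a monic polynomial of degree `l ≥ 1`.  Then for every
`ε > 0` the Haar measure (normalized so that `ℤ_p` has measure 1) of
`{z ∈ ℚ_p : |P(z)|_p < ε}` is at most `l · ε^{1/l}`. -/
theorem measure_monic_sublevel (p : ℕ) [Fact p.Prime]
    (μ : Measure ℚ_[p]) (hμ : μ.IsAddHaarMeasure)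
    (hμ1 : μ {x : ℚ_[p] | ‖x‖ ≤ 1} = 1)
    (P : Polynomial ℚ_[p]) (hP : P.Monic) (hdeg : 1 ≤ P.natDegree)
    (ε : ℝ) (hε : 0 < ε) :
    μ {z : ℚ_[p] | ‖P.eval z‖ < ε} ≤
      ENNReal.ofReal ((P.natDegree : ℝ) * ε ^ (1 / (P.natDegree : ℝ))) := by
  set l := P.natDegree
  set δ : ℝ≥0 := ⟨ε ^ (1 / (l : ℝ)), by positivity⟩
  have hδl : (δ : ℝ) ^ l = ε := by
    show (ε ^ (1 / (l : ℝ))) ^ l = ε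
    rw [one_div, Real.rpow_inv_natCast_pow hε.le (by omega)]
  have hball (x : ℚ_[p]) : μ (closedBall x δ) ≤ ENNReal.ofReal δ :=
    Padic.addHaar_closedBall_le μ (by convert hμ1; ext; simp) x (Real.rpow_pos_of_pos hε _)
  have hpack := hP.packingNumber_le_natDegree δ
  rw [hδl] at hpack
  calc μ {z | ‖P.eval z‖ < ε} ≤ packingNumber δ {z | ‖P.eval z‖ < ε} * ENNReal.ofReal δ :=
        measure_le_packingNumber_mul μ (ne_top_of_le_ne_top (by simp) hpack) hball
    _ ≤ l * ENNReal.ofReal δ := by gcongr; exact_mod_cast hpack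
    _ = ENNReal.ofReal (l * ε ^ (1 / (l : ℝ))) := by
        rw [ENNReal.ofReal_mul (by positivity), ENNReal.ofReal_natCast]
        rfl
end

section
/- Let p be a prime, let (a_{ij}) be an n×n matrix of nonnegative integers with nonzero determinant, and let m : (ℚ_p^×)^n → (ℚ_p^×)^n be the group homomorphism of the multiplicative group (ℚ_p^×)^n given by m(x)_i = ∏_{j=1}^n x_j^{a_{ij}}. Then the image m((ℚ_p^×)^n) is a subgroup of finite index in (ℚ_p^×)^n. Moreover, there exist positive integers a and b such that for all integers k_1,…,k_n and all x_1,…,x_n ∈ ℚ_p with |x_i − 1|_p < p^{−a} for all i, the point (p^{b k_1}x_1,…,p^{b k_n}x_n) lies in m((ℚ_p^×)^n). -/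
/-- The monomial map on the multiplicative group `(ℚ_p^×)^n` associated to a matrix of
nonnegative integer exponents. -/
noncomputable def monomialMapPadic {p : ℕ} [Fact p.Prime] {n : ℕ} (A : Matrix (Fin n) (Fin n) ℕ)
    (x : Fin n → ℚ_[p]ˣ) : Fin n → ℚ_[p]ˣ :=
  fun i => ∏ j, x j ^ A i j

/-- The prime `p`, as a unit of `ℚ_p`. -/
noncomputable def pUnit (p : ℕ) [hp : Fact p.Prime] : ℚ_[p]ˣ :=
  Units.mk0 (p : ℚ_[p]) (by exact_mod_cast hp.out.ne_zero)

/-!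
Let `d = det A`. Composing the monomial map with the one given by `sign d • adj A` is
`x ↦ x ^ |d|`, so the image contains every `|d|`-th power. By Hensel's lemma every `u` with
`‖u - 1‖ < ‖d‖²` is a `|d|`-th power, hence so is `p ^ (|d| k) * u`. For the index, the
`|d|`-th powers contain the kernel of `x ↦ (v_p(x) mod |d|, unit part of x mod p ^ N)` for
large `N`, a homomorphism to a finite group.
-/

lemma Finset.prod_zpow_eq_zpow_sum {ι G : Type*} [CommGroup G] (s : Finset ι) (f : ι → ℤ)
    (a : G) : ∏ i ∈ s, a ^ f i = a ^ ∑ i ∈ s, f i :=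
  cons_induction (by simp) (fun _ _ _ _ ↦ by simp [prod_cons, sum_cons, zpow_add, *]) s

section MonomialHom

variable {ι G : Type*} [Fintype ι] [CommGroup G]

def monomialHom (B : Matrix ι ι ℤ) : (ι → G) →* (ι → G) where
  toFun x i := ∏ j, x j ^ B i j
  map_one' := by ext; simp
  map_mul' x y := by ext i; simp [mul_zpow, Finset.prod_mul_distrib]

lemma monomialHom_apply (B : Matrix ι ι ℤ) (x : ι → G) (i : ι) :
    monomialHom B x i = ∏ j, x j ^ B i j := rfl

lemma monomialHom_mul (B C : Matrix ι ι ℤ) :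
    monomialHom (G := G) (B * C) = (monomialHom B).comp (monomialHom C) := by
  refine MonoidHom.ext fun x => funext fun i => ?_
  simp only [MonoidHom.comp_apply, monomialHom_apply, Matrix.mul_apply,
    ← Finset.prod_zpow_eq_zpow_sum, ← Finset.prod_zpow, ← zpow_mul]
  rw [Finset.prod_comm]
  simp only [mul_comm]

lemma monomialHom_smul_one [DecidableEq ι] (c : ℤ) (x : ι → G) :
    monomialHom (c • (1 : Matrix ι ι ℤ)) x = x ^ c := by
  ext i
  rw [monomialHom_apply, Finset.prod_eq_single i (fun j _ hj => by simp [Matrix.one_apply_ne' hj])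
    (by simp)]
  simp

lemma pow_natAbs_det_mem_range [DecidableEq ι] (B : Matrix ι ι ℤ) (x : ι → G) :
    x ^ B.det.natAbs ∈ (monomialHom B).range := by
  refine ⟨monomialHom (B.det.sign • B.adjugate) x, ?_⟩
  rw [← MonoidHom.comp_apply, ← monomialHom_mul, Matrix.mul_smul, Matrix.mul_adjugate,
    smul_smul, Int.sign_mul_self_eq_natAbs, monomialHom_smul_one, zpow_natCast]

end MonomialHom

lemma finiteIndex_range_powMonoidHom_pi {G M : Type*} [CommGroup G] [Group M] [Finite M]
    (ι : Type*) [Finite ι] {b : ℕ} {φ : G →* M} (hφ : φ.ker ≤ (powMonoidHom b).range) :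
    (powMonoidHom b : (ι → G) →* (ι → G)).range.FiniteIndex := by
  refine Subgroup.finiteIndex_of_le (H := (φ.compLeft ι).ker) fun x hx => ?_
  choose z hz using fun i => hφ (congrFun hx i)
  exact ⟨z, funext hz⟩

lemma coe_pUnit {p : ℕ} [Fact p.Prime] : ((pUnit p : ℚ_[p]ˣ) : ℚ_[p]) = p := rfl

noncomputable section

namespace Padic

variable {p : ℕ} [hp : Fact p.Prime]

def unitsValuation : ℚ_[p]ˣ →* Multiplicative ℤ where
  toFun x := .ofAdd (x : ℚ_[p]).valuation
  map_one' := by simp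
  map_mul' x y := by simp [valuation_mul x.ne_zero y.ne_zero, ofAdd_add]

lemma norm_mul_zpow_neg_valuation (x : ℚ_[p]ˣ) :
    ‖(x : ℚ_[p]) * (p : ℚ_[p]) ^ (-(x : ℚ_[p]).valuation)‖ = 1 := by
  rw [norm_mul, norm_zpow, norm_p, norm_eq_zpow_neg_valuation x.ne_zero, inv_zpow', neg_neg,
    ← zpow_add₀ (by exact_mod_cast hp.out.ne_zero), neg_add_cancel, zpow_zero]

def unitPart : ℚ_[p]ˣ →* ℤ_[p]ˣ where
  toFun x := PadicInt.mkUnits (norm_mul_zpow_neg_valuation x)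
  map_one' := Units.ext <| PadicInt.ext <| by simp
  map_mul' x y := Units.ext <| PadicInt.ext <| by
    have hp0 : (p : ℚ_[p]) ≠ 0 := by exact_mod_cast hp.out.ne_zero
    simp only [PadicInt.mkUnits_eq, Units.val_mul, PadicInt.coe_mul,
      valuation_mul x.ne_zero y.ne_zero, neg_add, zpow_add₀ hp0]
    ring

lemma coe_unitPart (x : ℚ_[p]ˣ) :
    ((unitPart x : ℤ_[p]) : ℚ_[p]) = x * (p : ℚ_[p]) ^ (-(x : ℚ_[p]).valuation) := rfl

lemma eq_zpow_valuation_mul_unitPart (x : ℚ_[p]ˣ) :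
    (x : ℚ_[p]) = (p : ℚ_[p]) ^ (x : ℚ_[p]).valuation * (unitPart x : ℤ_[p]) := by
  have hp0 : (p : ℚ_[p]) ^ (x : ℚ_[p]).valuation ≠ 0 :=
    zpow_ne_zero _ (by exact_mod_cast hp.out.ne_zero)
  rw [coe_unitPart, zpow_neg, mul_left_comm, mul_inv_cancel₀ hp0, mul_one]

open Polynomial in
lemma exists_units_pow_eq_of_norm_sub_one_lt {b : ℕ} {u : ℚ_[p]}
    (hu : ‖u - 1‖ < ‖(b : ℚ_[p])‖ ^ 2) : ∃ z : ℚ_[p]ˣ, (z : ℚ_[p]) ^ b = u := by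
  have hu1 : ‖u - 1‖ < 1 :=
    hu.trans_le (pow_le_one₀ (norm_nonneg _) (by exact_mod_cast norm_int_le_one b))
  have hu_int : ‖u‖ ≤ 1 := by
    simpa using (nonarchimedean (u - 1) 1).trans (max_le hu1.le norm_one.le)
  set U : ℤ_[p] := ⟨u, hu_int⟩
  have hnorm : ‖(X ^ b - C U).aeval (1 : ℤ_[p])‖ <
      ‖(X ^ b - C U).derivative.aeval (1 : ℤ_[p])‖ ^ 2 := by
    simpa [derivative_pow, norm_sub_rev (1 : ℤ_[p]), PadicInt.norm_def] using hu
  obtain ⟨z, hz, -⟩ := hensels_lemma hnorm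
  simp only [map_sub, map_pow, aeval_X, aeval_C, Algebra.algebraMap_self, RingHom.id_apply,
    sub_eq_zero] at hz
  have hzu : (z : ℚ_[p]) ^ b = u := by rw [← PadicInt.coe_pow, hz]
  have hb : b ≠ 0 := by
    rintro rfl
    exact (norm_nonneg _).not_gt (by simpa using hu)
  have hu0 : u ≠ 0 := by
    rintro rfl
    simp at hu1
  exact ⟨Units.mk0 _ (ne_zero_pow hb (hzu ▸ hu0)), hzu⟩

lemma exists_zpow_neg_lt_norm_natCast_sq {b : ℕ} (hb : b ≠ 0) :
    ∃ a : ℕ, 0 < a ∧ (p : ℝ) ^ (-(a : ℤ)) < ‖(b : ℚ_[p])‖ ^ 2 := by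
  refine ⟨2 * padicValNat p b + 1, by omega, ?_⟩
  rw [norm_eq_zpow_neg_valuation (by exact_mod_cast hb), valuation_natCast, ← zpow_natCast,
    ← zpow_mul]
  exact zpow_lt_zpow_right₀ (by exact_mod_cast hp.out.one_lt) (by push_cast; omega)

def residueHom (b N : ℕ) : ℚ_[p]ˣ →* Multiplicative (ZMod b) × (ZMod (p ^ N))ˣ :=
  ((Int.castAddHom (ZMod b)).toMultiplicative.comp unitsValuation).prod
    ((Units.map (PadicInt.toZModPow N : ℤ_[p] →+* ZMod (p ^ N)).toMonoidHom).comp unitPart)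

lemma ker_residueHom_le_range_powMonoidHom {b N : ℕ}
    (hN : (p : ℝ) ^ (-(N : ℤ)) < ‖(b : ℚ_[p])‖ ^ 2) :
    (residueHom b N).ker ≤ (powMonoidHom b : ℚ_[p]ˣ →* ℚ_[p]ˣ).range := by
  intro x hx
  simp only [MonoidHom.mem_ker, residueHom, MonoidHom.prod_apply, Prod.mk_eq_one,
    MonoidHom.comp_apply] at hx
  obtain ⟨hval, hunit⟩ := hx
  obtain ⟨m, hm⟩ : (b : ℤ) ∣ (x : ℚ_[p]).valuation := by
    simpa [unitsValuation, ← ZMod.intCast_zmod_eq_zero_iff_dvd] using hval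
  have hclose : ‖((unitPart x : ℤ_[p]) : ℚ_[p]) - 1‖ ≤ (p : ℝ) ^ (-(N : ℤ)) := by
    rw [← PadicInt.coe_one, ← PadicInt.coe_sub, ← PadicInt.norm_def,
      PadicInt.norm_le_pow_iff_mem_span_pow, ← PadicInt.ker_toZModPow, RingHom.mem_ker,
      map_sub, map_one, sub_eq_zero]
    simpa [Units.ext_iff] using hunit
  obtain ⟨z, hz⟩ := exists_units_pow_eq_of_norm_sub_one_lt (hclose.trans_lt hN)
  refine ⟨pUnit p ^ m * z, Units.ext ?_⟩
  rw [powMonoidHom_apply, Units.val_pow_eq_pow_val, Units.val_mul, mul_pow, hz,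
    Units.val_zpow_eq_zpow_val, eq_zpow_valuation_mul_unitPart x, hm, ← zpow_natCast,
    ← zpow_mul, coe_pUnit, mul_comm m, mul_comm]

end Padic

end

lemma det_of_natCast_eq_intCast_det_map {n : Type*} [Fintype n] [DecidableEq n]
    (A : Matrix n n ℕ) :
    (Matrix.of fun i j => (A i j : ℚ)).det = ((A.map ((↑) : ℕ → ℤ)).det : ℚ) := by
  rw [← eq_intCast (Int.castRingHom ℚ), RingHom.map_det]
  congr 1

lemma range_monomialMapPadic {p : ℕ} [Fact p.Prime] {n : ℕ} (A : Matrix (Fin n) (Fin n) ℕ) :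
    Set.range (monomialMapPadic (p := p) A) =
      ↑(monomialHom (G := ℚ_[p]ˣ) (A.map (↑))).range := by
  rw [MonoidHom.coe_range]
  refine congrArg Set.range (funext fun x => funext fun i => ?_)
  simp [monomialMapPadic, monomialHom_apply]

/-- **Lemma 5.1 (p-adic case).**  Let `p` be prime, `(a_{ij})` an `n×n` matrix of nonnegative
integers with nonzero determinant, and `m : (ℚ_p^×)^n → (ℚ_p^×)^n` the homomorphism
`m(x)_i = ∏_j x_j^{a_{ij}}`.  Then the image of `m` is a finite-index subgroup of `(ℚ_p^×)^n`,
and there are positive integers `a`, `b` such that for all integers `k_1,…,k_n` and all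
`x_i ∈ ℚ_p` with `|x_i − 1|_p < p^{-a}`, the point `(p^{bk_1}x_1,…,p^{bk_n}x_n)` lies in the
image of `m`. -/
theorem monomialMapPadic_range (p : ℕ) [hp : Fact p.Prime] (n : ℕ)
    (A : Matrix (Fin n) (Fin n) ℕ)
    (hA : (Matrix.of fun i j => (A i j : ℚ)).det ≠ 0) :
    (∃ H : Subgroup (Fin n → ℚ_[p]ˣ),
      (H : Set (Fin n → ℚ_[p]ˣ)) = Set.range (monomialMapPadic A) ∧ H.index ≠ 0) ∧
    ∃ a b : ℕ, 0 < a ∧ 0 < b ∧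
      ∀ (k : Fin n → ℤ) (x : Fin n → ℚ_[p]ˣ),
        (∀ i, ‖((x i : ℚ_[p]) - 1)‖ < (p : ℝ) ^ (-(a : ℤ))) →
        (fun i => pUnit p ^ ((b : ℤ) * k i) * x i) ∈ Set.range (monomialMapPadic A) := by
  have hD : (A.map ((↑) : ℕ → ℤ)).det ≠ 0 := by
    exact_mod_cast det_of_natCast_eq_intCast_det_map A ▸ hA
  obtain ⟨b, hb, hpow⟩ : ∃ b : ℕ, b ≠ 0 ∧
      (powMonoidHom b).range ≤ (monomialHom (G := ℚ_[p]ˣ) (A.map (↑))).range :=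
    ⟨_, Int.natAbs_ne_zero.2 hD, by
      rintro _ ⟨x, rfl⟩
      exact pow_natAbs_det_mem_range _ x⟩
  obtain ⟨a, ha, hab⟩ := Padic.exists_zpow_neg_lt_norm_natCast_sq (p := p) hb
  have : NeZero b := ⟨hb⟩
  rw [range_monomialMapPadic]
  refine ⟨⟨_, rfl, ?_⟩, a, b, ha, Nat.pos_of_ne_zero hb, fun k x hx => ?_⟩
  · have hker := Padic.ker_residueHom_le_range_powMonoidHom (p := p) hab
    have := finiteIndex_range_powMonoidHom_pi (Fin n) hker
    exact (Subgroup.finiteIndex_of_le hpow).index_ne_zero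
  · have hroot (i : Fin n) : ∃ z : ℚ_[p]ˣ, z ^ b = x i := by
      obtain ⟨z, hz⟩ := Padic.exists_units_pow_eq_of_norm_sub_one_lt ((hx i).trans hab)
      exact ⟨z, Units.ext (by push_cast; exact hz)⟩
    choose z hz using hroot
    refine hpow ⟨fun i => pUnit p ^ k i * z i, funext fun i => ?_⟩
    rw [powMonoidHom_apply, Pi.pow_apply, mul_pow, ← zpow_natCast, ← zpow_mul, mul_comm (k i),
      hz]
end

section
/- Let (a_{ij}) be an n×n matrix of nonnegative integers with nonzero determinant, and let m : (ℝ^×)^n → (ℝ^×)^n be the group homomorphism of the multiplicative group (ℝ^×)^n given by m(x)_i = ∏_{j=1}^n x_j^{a_{ij}}. Then the image m((ℝ^×)^n) is a subgroup of finite index in (ℝ^×)^n. -/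
/-- The monomial map on the multiplicative group `(ℝ^×)^n` associated to a matrix of
nonnegative integer exponents. -/
def monomialMapReal {n : ℕ} (A : Matrix (Fin n) (Fin n) ℕ) (x : Fin n → ℝˣ) : Fin n → ℝˣ :=
  fun i => ∏ j, x j ^ A i j

/-- `monomialMapReal` as a monoid hom. -/
def monomialHomReal {n : ℕ} (A : Matrix (Fin n) (Fin n) ℕ) :
    (Fin n → ℝˣ) →* (Fin n → ℝˣ) where
  toFun := monomialMapReal A
  map_one' := by funext i; simp [monomialMapReal]
  map_mul' x y := by
    funext i
    simp [monomialMapReal, mul_pow, Finset.prod_mul_distrib]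

/-- The sign homomorphism `ℝˣ →* ℤˣ`. -/
noncomputable def signUnitHom : ℝˣ →* ℤˣ where
  toFun u := if (0:ℝ) < (u : ℝ) then 1 else -1
  map_one' := by simp
  map_mul' u v := by
    have hu : (0:ℝ) < (u:ℝ) ∨ (u:ℝ) < 0 := (lt_or_gt_of_ne u.ne_zero).symm
    have hv : (0:ℝ) < (v:ℝ) ∨ (v:ℝ) < 0 := (lt_or_gt_of_ne v.ne_zero).symm
    rcases hu with hu | hu <;> rcases hv with hv | hv
    · simp [Units.val_mul, mul_pos hu hv, hu, hv]
    · simp [Units.val_mul, not_lt.2 (mul_nonpos_of_nonneg_of_nonpos hu.le hv.le),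
        hu, not_lt.2 hv.le]
    · simp [Units.val_mul, not_lt.2 (mul_nonpos_of_nonpos_of_nonneg hu.le hv.le),
        not_lt.2 hu.le, hv]
    · simp [Units.val_mul, mul_pos_of_neg_of_neg hu hv, not_lt.2 hu.le, not_lt.2 hv.le]

lemma signUnitHom_eq_one_iff (u : ℝˣ) : signUnitHom u = 1 ↔ (0:ℝ) < (u : ℝ) := by
  unfold signUnitHom
  by_cases h : (0:ℝ) < (u:ℝ) <;> simp [h]

/-- Let `(a_{ij})` be an `n×n` matrix of nonnegative integers with nonzero determinant, and let
`m : (ℝ^×)^n → (ℝ^×)^n` be the group homomorphism `m(x)_i = ∏_j x_j^{a_{ij}}`.  Then the image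
`m((ℝ^×)^n)` is a subgroup of finite index in `(ℝ^×)^n`. -/
theorem monomialMapReal_range_finiteIndex (n : ℕ) (A : Matrix (Fin n) (Fin n) ℕ)
    (hA : (Matrix.of fun i j => (A i j : ℚ)).det ≠ 0) :
    ∃ H : Subgroup (Fin n → ℝˣ),
      (H : Set (Fin n → ℝˣ)) = Set.range (monomialMapReal A) ∧ H.index ≠ 0 := by
  set f := monomialHomReal A
  refine ⟨f.range, rfl, ?_⟩
  -- the subgroup of componentwise positive elements
  set Sg : (Fin n → ℝˣ) →* (Fin n → ℤˣ) := MonoidHom.compLeft signUnitHom (Fin n)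
  set K := Sg.ker
  -- real matrix
  set B : Matrix (Fin n) (Fin n) ℝ := Matrix.of fun i j => (A i j : ℝ)
  have hB : B.det ≠ 0 := by
    have hdet : B = (algebraMap ℚ ℝ).mapMatrix (Matrix.of fun i j => (A i j : ℚ)) := by
      ext i j
      simp [B, RingHom.mapMatrix_apply]
    rw [hdet, ← RingHom.map_det]
    simpa using hA
  have hKle : K ≤ f.range := by
    intro y hy
    have hpos : ∀ i, (0:ℝ) < (y i : ℝ) := by
      intro i
      have := congrFun (MonoidHom.mem_ker.mp hy) i
      exact (signUnitHom_eq_one_iff (y i)).mp this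
    -- solve the linear system
    set c : Fin n → ℝ := B⁻¹.mulVec (fun i => Real.log (y i))
    have hBc : B.mulVec c = fun i => Real.log (y i) := by
      rw [Matrix.mulVec_mulVec, Matrix.mul_nonsing_inv _ (isUnit_iff_ne_zero.mpr hB)]
      simp
    refine ⟨fun j => Units.mk0 (Real.exp (c j)) (Real.exp_ne_zero _), ?_⟩
    funext i
    apply Units.ext
    have : ((monomialMapReal A (fun j => Units.mk0 (Real.exp (c j)) (Real.exp_ne_zero _)) i : ℝˣ) : ℝ)
        = ∏ j, Real.exp (c j) ^ A i j := by
      simp [monomialMapReal]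
    rw [show f = monomialHomReal A from rfl]
    show ((monomialMapReal A _ i : ℝˣ) : ℝ) = (y i : ℝ)
    rw [this]
    have : ∏ j, Real.exp (c j) ^ A i j = Real.exp (∑ j, (A i j : ℝ) * c j) := by
      rw [Real.exp_sum]
      congr 1; funext j
      rw [← Real.exp_nat_mul]
      try push_cast
      try ring_nf
    rw [this]
    have hAc : ∑ j, (A i j : ℝ) * c j = Real.log (y i) := by
      have := congrFun hBc i
      simpa [Matrix.mulVec, dotProduct, B] using this
    rw [hAc, Real.exp_log (hpos i)]
  have hKindex : K.index ≠ 0 := by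
    rw [Subgroup.index_ker]
    exact Nat.card_ne_zero.mpr ⟨⟨⟨1, one_mem _⟩⟩, Subtype.finite⟩
  intro h0
  exact hKindex (Nat.eq_zero_of_zero_dvd (h0 ▸ Subgroup.index_dvd_of_le hKle))
end
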